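/- arXiv:0711.4175 — 4 statements merged into one kernel-verified Lean document; each statement's English description precedes it below -/
import Mathlib

section
/- For every finite directed graph G = (V,E) and every integer s ≥ 2, the entropy of G over an alphabet of size s equals the guessing number of G over that alphabet: E(G,s) = g(G,s). -/
open Finset

/-! ## Basic setup: directed graphs, guessing games, entropy (Riis, "Graph Entropy,
Network Coding and Guessing games"). -/

/-- The set `N⁻(j)` of in-neighbours of a vertex `j` in the directed graph given by
the edge relation `E` (an edge `(i,j)` is `E i j`). -/
def inNbr {V : Type*} [Fintype V] (E : V → V → Prop) [DecidableRel E] (j : V) : Finset V :=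
  Finset.univ.filter (fun i => E i j)

/-- `p` is a probability distribution on `V → A`. -/
def IsProbDist {V A : Type*} [Fintype V] [DecidableEq V] [Fintype A] (p : (V → A) → ℝ) : Prop :=
  (∀ x, 0 ≤ p x) ∧ ∑ x : V → A, p x = 1

/-- The marginal probability, under `p`, that the coordinates in `S` agree with `y`. -/
noncomputable def marginalPMF {V A : Type*} [Fintype V] [DecidableEq V] [Fintype A] [DecidableEq A]
    (p : (V → A) → ℝ) (S : Finset V) (y : ↥S → A) : ℝ :=
  ∑ x : V → A, if ∀ i : ↥S, x i.1 = y i then p x else 0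

/-- `Hent s p S` : the base-`s` Shannon entropy of the marginal of `p` on the
coordinates in `S` (using `Real.negMulLog`, so the convention `0·log(1/0) = 0` holds). -/
noncomputable def Hent {V A : Type*} [Fintype V] [DecidableEq V] [Fintype A] [DecidableEq A]
    (s : ℕ) (p : (V → A) → ℝ) (S : Finset V) : ℝ :=
  (∑ y : ↥S → A, Real.negMulLog (marginalPMF p S y)) / Real.log s

/-- `p` satisfies the information constraints of the graph: `H(j | N⁻(j)) = 0` for every
vertex `j`, where `H(X | Y) = H(X ∪ Y) − H(Y)`. -/
def InfoConstraints {V A : Type*} [Fintype V] [DecidableEq V] [Fintype A] [DecidableEq A]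
    (E : V → V → Prop) [DecidableRel E] (s : ℕ) (p : (V → A) → ℝ) : Prop :=
  ∀ j : V, Hent s p (insert j (inNbr E j)) - Hent s p (inNbr E j) = 0

/-- The (private) entropy `E(G,s)` of the graph over an alphabet of size `s`:
the sup of `H_p(V)` over probability distributions on `A^V` (`A = Fin s`)
satisfying the information constraints of the graph. -/
noncomputable def graphEntropy {V : Type*} [Fintype V] [DecidableEq V]
    (E : V → V → Prop) [DecidableRel E] (s : ℕ) : ℝ :=
  sSup {h : ℝ | ∃ p : (V → Fin s) → ℝ,
    IsProbDist p ∧ InfoConstraints E s p ∧ h = Hent s p Finset.univ}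

/-- The general entropy `E(G) = sup_{s ≥ 2} E(G,s)`. -/
noncomputable def genEntropy {V : Type*} [Fintype V] [DecidableEq V]
    (E : V → V → Prop) [DecidableRel E] : ℝ :=
  sSup {h : ℝ | ∃ s : ℕ, 2 ≤ s ∧ h = graphEntropy E s}

/-- A guessing strategy: each vertex `j` guesses a value `g j x` which may only depend on
the values `x i` for in-neighbours `i` of `j`. -/
def IsStrategy {V A : Type*} (E : V → V → Prop) (g : V → (V → A) → A) : Prop :=
  ∀ j x y, (∀ i, E i j → x i = y i) → g j x = g j y

/-- The set of assignments at which all players guess correctly. -/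
def correctSet {V A : Type*} [Fintype V] [DecidableEq V] [Fintype A] [DecidableEq A]
    (g : V → (V → A) → A) : Finset (V → A) :=
  Finset.univ.filter (fun x => ∀ j, g j x = x j)

/-- The maximal number of assignments at which all players guess correctly,
over all guessing strategies (over the alphabet `Fin s`). -/
noncomputable def maxCorrect {V : Type*} [Fintype V] [DecidableEq V]
    (E : V → V → Prop) [DecidableRel E] (s : ℕ) : ℕ :=
  sSup {m : ℕ | ∃ g : V → (V → Fin s) → Fin s, IsStrategy E g ∧ m = (correctSet g).card}

/-- The maximal probability (with `x` uniform on `A^V`) that all players guess correctly. -/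
noncomputable def maxProb {V : Type*} [Fintype V] [DecidableEq V]
    (E : V → V → Prop) [DecidableRel E] (s : ℕ) : ℝ :=
  (maxCorrect E s : ℝ) / (s : ℝ) ^ Fintype.card V

/-- The guessing number `g(G,s)`: the unique `α` with maximal success probability
`(1/s)^(n−α)`, i.e. `α = n + log_s (maximal probability)`. -/
noncomputable def guessingNumber {V : Type*} [Fintype V] [DecidableEq V]
    (E : V → V → Prop) [DecidableRel E] (s : ℕ) : ℝ :=
  (Fintype.card V : ℝ) + Real.logb s (maxProb E s)

/-- The general guessing number `g(G) = sup_{s ≥ 2} g(G,s)`. -/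
noncomputable def genGuessing {V : Type*} [Fintype V] [DecidableEq V]
    (E : V → V → Prop) [DecidableRel E] : ℝ :=
  sSup {h : ℝ | ∃ s : ℕ, 2 ≤ s ∧ h = guessingNumber E s}

/-! ## Entropy-like functions -/

/-- An S-entropy-like function: `f ∅ = 0`, monotone and submodular (the polymatroidal
axioms, equivalently Shannon's information inequalities). -/
def SEntLike {U : Type*} [DecidableEq U] (f : Finset U → ℝ) : Prop :=
  f ∅ = 0 ∧ (∀ X Y, X ⊆ Y → f X ≤ f Y) ∧ ∀ X Y, f (X ∩ Y) + f (X ∪ Y) ≤ f X + f Y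

/-- Mutual information `I_f(X;Y|Z)` of an entropy-like function. -/
def mutI {U : Type*} [DecidableEq U] (f : Finset U → ℝ) (X Y Z : Finset U) : ℝ :=
  f (X ∪ Z) + f (Y ∪ Z) - f (X ∪ Y ∪ Z) - f Z

/-- A Zhang–Yeung entropy-like function: S-entropy-like and satisfying the ZY
non-Shannon information inequality for all `A B C D`. -/
def ZYEntLike {U : Type*} [DecidableEq U] (f : Finset U → ℝ) : Prop :=
  SEntLike f ∧ ∀ A B C D : Finset U,
    2 * mutI f C D ∅ ≤ mutI f A B ∅ + mutI f A (C ∪ D) ∅ + 3 * mutI f C D A + mutI f C D B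

/-- `f` satisfies the information constraints of the graph:
`f(N⁻(j) ∪ {j}) = f(N⁻(j))` for every vertex `j`. -/
def FConstraints {V : Type*} [Fintype V] [DecidableEq V]
    (E : V → V → Prop) [DecidableRel E] (f : Finset V → ℝ) : Prop :=
  ∀ j : V, f (insert j (inNbr E j)) = f (inNbr E j)

/-- The S-entropy `E_S(G)`: the maximal value of `f(V)` over normalized S-entropy-like
functions satisfying the information constraints of `G`. -/
noncomputable def SEnt {V : Type*} [Fintype V] [DecidableEq V]
    (E : V → V → Prop) [DecidableRel E] : ℝ :=
  sSup {h : ℝ | ∃ f : Finset V → ℝ,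
    SEntLike f ∧ (∀ j : V, f {j} ≤ 1) ∧ FConstraints E f ∧ h = f Finset.univ}

/-- The ZY-entropy `E_ZY(G)`. -/
noncomputable def ZYEnt {V : Type*} [Fintype V] [DecidableEq V]
    (E : V → V → Prop) [DecidableRel E] : ℝ :=
  sSup {h : ℝ | ∃ f : Finset V → ℝ,
    ZYEntLike f ∧ (∀ j : V, f {j} ≤ 1) ∧ FConstraints E f ∧ h = f Finset.univ}

/-! ## Acyclicity -/

/-- The subgraph induced on `S` is acyclic: no directed cycle within `S`. -/
def AcyclicOn {V : Type*} (E : V → V → Prop) (S : Finset V) : Prop :=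
  ∀ v ∈ S, ¬ Relation.TransGen (fun a b => a ∈ S ∧ b ∈ S ∧ E a b) v v

/-- The acyclic independence number: the maximal size of a vertex set inducing an
acyclic subgraph. -/
noncomputable def acycIndepNum {V : Type*} [Fintype V] (E : V → V → Prop) : ℕ :=
  sSup {k : ℕ | ∃ S : Finset V, AcyclicOn E S ∧ k = S.card}

/-! ## Index codes -/

/-- An index code protocol: a broadcast map `Φ` together with decoding functions `d j`
(depending only on the in-neighbour values and the broadcast message) recovering `x j`. -/
def IsIndexCode {V A W : Type*} (E : V → V → Prop)
    (Φ : (V → A) → W) (d : V → (V → A) → W → A) : Prop :=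
  (∀ (j : V) (x y : V → A) (w : W), (∀ i, E i j → x i = y i) → d j x w = d j y w) ∧
  ∀ (x : V → A) (j : V), d j x (Φ x) = x j

/-- The length `log_s |Φ(A^V)|` of an index code protocol. -/
noncomputable def protocolLength {V A W : Type*} [Fintype V] [DecidableEq V] [Fintype A]
    [Fintype W] [DecidableEq W] (s : ℕ) (Φ : (V → A) → W) : ℝ :=
  Real.logb s ((Finset.univ.image Φ).card)

/-- The base-`s` entropy of the broadcast message `Φ(x)` for `x` uniform on `A^V`. -/
noncomputable def protocolEntropy {V A W : Type*} [Fintype V] [DecidableEq V] [Fintype A]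
    [DecidableEq A] [Fintype W] [DecidableEq W] (s : ℕ) (Φ : (V → A) → W) : ℝ :=
  (∑ w : W, Real.negMulLog
    (((Finset.univ.filter (fun x : V → A => Φ x = w)).card : ℝ) / (s : ℝ) ^ Fintype.card V))
    / Real.log s

/-- `i(G,s)`: the minimal length of an index code for `G` over `Fin s`. -/
noncomputable def indexCodeLen {V : Type*} [Fintype V] [DecidableEq V]
    (E : V → V → Prop) [DecidableRel E] (s : ℕ) : ℝ :=
  sInf {h : ℝ | ∃ (W : Type) (iW : Fintype W) (dW : DecidableEq W)
    (Φ : (V → Fin s) → W) (d : V → (V → Fin s) → W → Fin s),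
    IsIndexCode E Φ d ∧ h = @protocolLength V (Fin s) W _ _ _ iW dW s Φ}

/-- `i_entro(G,s)`: the minimal entropy of an index code for `G` over `Fin s`. -/
noncomputable def indexCodeEntro {V : Type*} [Fintype V] [DecidableEq V]
    (E : V → V → Prop) [DecidableRel E] (s : ℕ) : ℝ :=
  sInf {h : ℝ | ∃ (W : Type) (iW : Fintype W) (dW : DecidableEq W)
    (Φ : (V → Fin s) → W) (d : V → (V → Fin s) → W → Fin s),
    IsIndexCode E Φ d ∧ h = @protocolEntropy V (Fin s) W _ _ _ _ iW dW s Φ}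

/-- The information constraints on `V ∪ {w}` (`w = none`) used to define the S/ZY-minimal
index code: `f(N⁻(j) ∪ {w} ∪ {j}) = f(N⁻(j) ∪ {w})` for each `j`, `f(V ∪ {w}) = f(V)`
and `f(V) = n`. -/
def WConstraints {V : Type*} [Fintype V] [DecidableEq V]
    (E : V → V → Prop) [DecidableRel E] (f : Finset (Option V) → ℝ) : Prop :=
  (∀ j : V, f (insert (some j) (insert none ((inNbr E j).image some)))
      = f (insert none ((inNbr E j).image some))) ∧
  f (insert none ((Finset.univ : Finset V).image some))
      = f ((Finset.univ : Finset V).image some) ∧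
  f ((Finset.univ : Finset V).image some) = (Fintype.card V : ℝ)

/-- The S-minimal index code `i_S(G)`. -/
noncomputable def iS {V : Type*} [Fintype V] [DecidableEq V]
    (E : V → V → Prop) [DecidableRel E] : ℝ :=
  sInf {h : ℝ | ∃ f : Finset (Option V) → ℝ,
    SEntLike f ∧ (∀ j : V, f {some j} ≤ 1) ∧ WConstraints E f ∧ h = f {none}}

/-- The ZY-minimal index code `i_ZY(G)`. -/
noncomputable def iZY {V : Type*} [Fintype V] [DecidableEq V]
    (E : V → V → Prop) [DecidableRel E] : ℝ :=
  sInf {h : ℝ | ∃ f : Finset (Option V) → ℝ,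
    ZYEntLike f ∧ (∀ j : V, f {some j} ≤ 1) ∧ WConstraints E f ∧ h = f {none}}

/-! ## The bidirected pentagon `C5` -/

/-- The pentagon with bidirected edges: vertices `Fin 5`, edges between cyclically
adjacent vertices. -/
def E5 : Fin 5 → Fin 5 → Prop := fun i j => (i.1 + 1) % 5 = j.1 ∨ (j.1 + 1) % 5 = i.1

instance : DecidableRel E5 := fun i j => by unfold E5; infer_instance

/-!
If `p` satisfies the information constraints, then on the support of `p` each `x_j` is a function
of `x_{N⁻(j)}`: equality `H(N⁻(j) ∪ {j}) = H(N⁻(j))` in the subadditivity of `negMulLog` over the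
fibres forces every fibre to carry a single value of `x_j`. So the support lies in the correct set
of some strategy and `H_p(V) ≤ log_s |supp p| ≤ log_s M`, where `M` is the maximal number of
correct assignments. Conversely, the uniform distribution on the correct set of an optimal
strategy satisfies the constraints and has entropy `log_s M`, while
`g(G,s) = n + log_s (M / s^n) = log_s M`.
-/

open Real

section NegMulLog

variable {ι : Type*} {s : Finset ι} {q : ι → ℝ}

lemma negMulLog_sum_eq_sum (s : Finset ι) (q : ι → ℝ) :
    negMulLog (∑ i ∈ s, q i) = ∑ i ∈ s, -(q i * log (∑ j ∈ s, q j)) := by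
  rw [negMulLog, Finset.sum_neg_distrib, ← Finset.sum_mul, neg_mul]

lemma neg_mul_log_sum_le_negMulLog (hq : ∀ i ∈ s, 0 ≤ q i) {i : ι} (hi : i ∈ s) :
    -(q i * log (∑ j ∈ s, q j)) ≤ negMulLog (q i) := by
  rw [negMulLog, neg_mul, neg_le_neg_iff]
  rcases (hq i hi).eq_or_lt with h | h
  · simp [← h]
  · exact mul_le_mul_of_nonneg_left (log_le_log h (Finset.single_le_sum hq hi)) h.le

lemma negMulLog_sum_le_sum_negMulLog (hq : ∀ i ∈ s, 0 ≤ q i) :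
    negMulLog (∑ i ∈ s, q i) ≤ ∑ i ∈ s, negMulLog (q i) := by
  rw [negMulLog_sum_eq_sum]
  exact Finset.sum_le_sum fun i hi => neg_mul_log_sum_le_negMulLog hq hi

lemma negMulLog_sum_lt_sum_negMulLog (hq : ∀ i ∈ s, 0 ≤ q i) {i j : ι} (hi : i ∈ s)
    (hj : j ∈ s) (hij : i ≠ j) (hqi : q i ≠ 0) (hqj : q j ≠ 0) :
    negMulLog (∑ k ∈ s, q k) < ∑ k ∈ s, negMulLog (q k) := by
  have hqi_pos : 0 < q i := (hq i hi).lt_of_ne' hqi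
  have hlt : q i < ∑ k ∈ s, q k :=
    (lt_add_of_pos_right _ ((hq j hj).lt_of_ne' hqj)).trans_le (Finset.add_le_sum hq hi hj hij)
  rw [negMulLog_sum_eq_sum]
  refine Finset.sum_lt_sum (fun k hk => neg_mul_log_sum_le_negMulLog hq hk) ⟨i, hi, ?_⟩
  rw [negMulLog, neg_mul, neg_lt_neg_iff]
  exact mul_lt_mul_of_pos_left (log_lt_log hqi_pos hlt) hqi_pos

lemma negMulLog_sum_eq_sum_negMulLog_iff (hq : ∀ i ∈ s, 0 ≤ q i) :
    negMulLog (∑ i ∈ s, q i) = ∑ i ∈ s, negMulLog (q i) ↔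
      ∀ i ∈ s, ∀ j ∈ s, q i ≠ 0 → q j ≠ 0 → i = j := by
  constructor
  · intro heq i hi j hj hqi hqj
    by_contra hij
    exact (negMulLog_sum_lt_sum_negMulLog hq hi hj hij hqi hqj).ne heq
  · intro huniq
    by_cases h : ∃ i ∈ s, q i ≠ 0
    · obtain ⟨i, hi, hqi⟩ := h
      have hzero : ∀ j ∈ s, j ≠ i → q j = 0 := fun j hj hji =>
        by_contra fun hqj => hji (huniq j hj i hi hqj hqi)
      rw [Finset.sum_eq_single_of_mem i hi hzero, Finset.sum_eq_single_of_mem i hi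
        fun j hj hji => by rw [hzero j hj hji, negMulLog_zero]]
    · push Not at h
      rw [Finset.sum_eq_zero h, Finset.sum_eq_zero fun i hi => by rw [h i hi, negMulLog_zero],
        negMulLog_zero]

end NegMulLog

lemma sum_negMulLog_le_log_card_support {ι : Type*} [Fintype ι] {p : ι → ℝ}
    (hp₀ : ∀ i, 0 ≤ p i) (hp₁ : ∑ i, p i = 1) :
    ∑ i, negMulLog (p i) ≤ log #{i | p i ≠ 0} := by
  set t : Finset ι := {i | p i ≠ 0}
  have hpos : ∀ i ∈ t, 0 < p i := fun i hi => (hp₀ i).lt_of_ne' (Finset.mem_filter.1 hi).2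
  have hsum : ∑ i ∈ t, p i = 1 := by rw [Finset.sum_filter_ne_zero, hp₁]
  -- Jensen for `log` at the points `1 / p i` with weights `p i`
  have hJensen := strictConcaveOn_log_Ioi.concaveOn.le_map_sum (t := t) (w := p)
    (p := fun i => (p i)⁻¹) (fun i _ => hp₀ i) hsum fun i hi => inv_pos.2 (hpos i hi)
  have hlhs : ∑ i ∈ t, p i • log (p i)⁻¹ = ∑ i, negMulLog (p i) := calc
    _ = ∑ i ∈ t, negMulLog (p i) :=
      Finset.sum_congr rfl fun i _ => by rw [smul_eq_mul, log_inv, negMulLog]; ring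
    _ = ∑ i, negMulLog (p i) :=
      Finset.sum_filter_of_ne fun i _ h hi => h (by rw [hi, negMulLog_zero])
  have hrhs : ∑ i ∈ t, p i • (p i)⁻¹ = #t := by
    simp_rw [smul_eq_mul]
    rw [Finset.sum_congr rfl fun i hi => mul_inv_cancel₀ (hpos i hi).ne', Finset.sum_const,
      nsmul_one]
  rwa [hlhs, hrhs] at hJensen

section Pushforward

variable {X B C : Type*} [Fintype X] [DecidableEq B] [DecidableEq C] {p : X → ℝ}

def fiberMass (p : X → ℝ) (f : X → B) (b : B) : ℝ :=
  ∑ x with f x = b, p x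

/-- The entropy, in nats, of the law of `f` when the argument has distribution `p`. -/
noncomputable def pushEntropy [Fintype B] (p : X → ℝ) (f : X → B) : ℝ :=
  ∑ b, negMulLog (fiberMass p f b)

lemma fiberMass_nonneg (hp : ∀ x, 0 ≤ p x) (f : X → B) (b : B) : 0 ≤ fiberMass p f b :=
  Finset.sum_nonneg fun x _ => hp x

lemma fiberMass_ne_zero_iff (hp : ∀ x, 0 ≤ p x) {f : X → B} {b : B} :
    fiberMass p f b ≠ 0 ↔ ∃ x, p x ≠ 0 ∧ f x = b := by
  rw [fiberMass, Ne, Finset.sum_eq_zero_iff_of_nonneg fun x _ => hp x]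
  simp [and_comm]

lemma fiberMass_id (p : X → ℝ) [DecidableEq X] (y : X) : fiberMass p id y = p y := by
  simp [fiberMass, Finset.filter_eq']

lemma fiberMass_comp [Fintype C] (p : X → ℝ) (g : X → C) (φ : C → B) (b : B) :
    fiberMass p (φ ∘ g) b = ∑ c with φ c = b, fiberMass p g c := by
  rw [fiberMass, ← Finset.sum_fiberwise_of_maps_to (g := g) (t := {c | φ c = b})
    fun x hx => by simpa using hx]
  refine Finset.sum_congr rfl fun c hc => ?_
  rw [fiberMass, Finset.filter_filter]
  congr 1
  ext x
  simp only [Finset.mem_filter, Finset.mem_univ, true_and, Function.comp_apply] at hc ⊢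
  exact ⟨And.right, fun hx => ⟨hx ▸ hc, hx⟩⟩

variable [Fintype B] [Fintype C]

lemma pushEntropy_comp_eq_sum (p : X → ℝ) (g : X → C) (φ : C → B) :
    pushEntropy p (φ ∘ g) = ∑ b, negMulLog (∑ c with φ c = b, fiberMass p g c) := by
  simp only [pushEntropy, fiberMass_comp]

lemma pushEntropy_eq_sum_fiberwise (p : X → ℝ) (g : X → C) (φ : C → B) :
    pushEntropy p g = ∑ b, ∑ c with φ c = b, negMulLog (fiberMass p g c) :=
  (Finset.sum_fiberwise _ φ _).symm

lemma pushEntropy_comp_eq_iff (hp : ∀ x, 0 ≤ p x) (g : X → C) (φ : C → B) :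
    pushEntropy p (φ ∘ g) = pushEntropy p g ↔
      ∀ x x', p x ≠ 0 → p x' ≠ 0 → φ (g x) = φ (g x') → g x = g x' := by
  rw [pushEntropy_comp_eq_sum, pushEntropy_eq_sum_fiberwise p g φ,
    Finset.sum_eq_sum_iff_of_le fun b _ =>
      negMulLog_sum_le_sum_negMulLog fun c _ => fiberMass_nonneg hp g c]
  simp only [Finset.mem_univ, true_implies, Finset.mem_filter, true_and,
    negMulLog_sum_eq_sum_negMulLog_iff fun c _ => fiberMass_nonneg hp g c,
    fiberMass_ne_zero_iff hp]
  constructor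
  · intro h x x' hx hx' hφ
    exact h _ _ rfl _ hφ.symm ⟨x, hx, rfl⟩ ⟨x', hx', rfl⟩
  · rintro h b _ hc _ hc' ⟨x, hx, rfl⟩ ⟨x', hx', rfl⟩
    exact h x x' hx hx' (hc.trans hc'.symm)

lemma pushEntropy_eq_sum_negMulLog [DecidableEq X] (hp : ∀ x, 0 ≤ p x) {f : X → B}
    (hf : Function.Injective f) : pushEntropy p f = ∑ x, negMulLog (p x) := by
  rw [← Function.comp_id f, (pushEntropy_comp_eq_iff hp id f).2 fun _ _ _ _ h => hf h]
  simp only [pushEntropy, fiberMass_id]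

end Pushforward

lemma Finset.restrict_eq_restrict_iff {ι : Type*} {β : ι → Type*} {S : Finset ι}
    {x y : (i : ι) → β i} : S.restrict x = S.restrict y ↔ ∀ i ∈ S, x i = y i := by
  simp [funext_iff]

section Entropy

variable {V A : Type*} [Fintype V] [DecidableEq V] [Fintype A] [DecidableEq A]
  {p : (V → A) → ℝ}

lemma marginalPMF_eq_fiberMass (p : (V → A) → ℝ) (S : Finset V) :
    marginalPMF p S = fiberMass p S.restrict := by
  funext y
  rw [marginalPMF, fiberMass, Finset.sum_filter]
  simp only [funext_iff, Finset.restrict]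

lemma hent_eq_pushEntropy (s : ℕ) (p : (V → A) → ℝ) (S : Finset V) :
    Hent s p S = pushEntropy p S.restrict / log s := by
  rw [Hent, marginalPMF_eq_fiberMass, pushEntropy]

lemma hent_univ (s : ℕ) (hp : ∀ x, 0 ≤ p x) :
    Hent s p univ = (∑ x, negMulLog (p x)) / log s := by
  rw [hent_eq_pushEntropy, pushEntropy_eq_sum_negMulLog hp]
  intro x y hxy
  funext i
  exact Finset.restrict_eq_restrict_iff.1 hxy i (mem_univ i)

lemma hent_insert_eq_iff {s : ℕ} (hs : 1 < s) (hp : ∀ x, 0 ≤ p x) (j : V) (S : Finset V) :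
    Hent s p (insert j S) = Hent s p S ↔
      ∀ x x', p x ≠ 0 → p x' ≠ 0 → (∀ i ∈ S, x i = x' i) → x j = x' j := by
  rw [hent_eq_pushEntropy, hent_eq_pushEntropy,
    div_left_inj' (log_pos (by exact_mod_cast hs)).ne', eq_comm,
    ← Finset.restrict₂_comp_restrict (subset_insert j S), pushEntropy_comp_eq_iff hp]
  refine forall₄_congr fun x x' _ _ => ?_
  change (S.restrict x = S.restrict x' → _) ↔ _
  simp only [Finset.restrict_eq_restrict_iff, Finset.forall_mem_insert]
  exact ⟨fun h hS => (h hS).1, fun h hS => ⟨h hS, hS⟩⟩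

end Entropy

section Strategies

variable {V A : Type*} (E : V → V → Prop)

def IsLocallyDetermined (C : Finset (V → A)) : Prop :=
  ∀ j x y, x ∈ C → y ∈ C → (∀ i, E i j → x i = y i) → x j = y j

variable {E}

lemma IsStrategy.isLocallyDetermined_correctSet [Fintype V] [DecidableEq V] [Fintype A]
    [DecidableEq A] {g : V → (V → A) → A} (hg : IsStrategy E g) :
    IsLocallyDetermined E (correctSet g) := by
  intro j x y hx hy hxy
  rw [← (Finset.mem_filter.1 hx).2 j, ← (Finset.mem_filter.1 hy).2 j]
  exact hg j x y hxy

lemma IsLocallyDetermined.exists_isStrategy_subset_correctSet [Fintype V] [DecidableEq V]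
    [Fintype A] [DecidableEq A] [Nonempty A] {C : Finset (V → A)}
    (hC : IsLocallyDetermined E C) : ∃ g, IsStrategy E g ∧ C ⊆ correctSet g := by
  let g : V → (V → A) → A := fun j x =>
    Classical.epsilon (fun y => y ∈ C ∧ ∀ i, E i j → y i = x i) j
  refine ⟨g, fun j x y hxy => ?_, fun x hx => ?_⟩
  · have hsame : (fun z : V → A => z ∈ C ∧ ∀ i, E i j → z i = x i) =
        fun z => z ∈ C ∧ ∀ i, E i j → z i = y i :=
      funext fun z => propext <| and_congr_right fun _ =>
        forall₂_congr fun i hi => by rw [hxy i hi]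
    simp only [g, hsame]
  · refine Finset.mem_filter.2 ⟨mem_univ x, fun j => ?_⟩
    obtain ⟨hyC, hy⟩ := Classical.epsilon_spec
      (p := fun y => y ∈ C ∧ ∀ i, E i j → y i = x i) ⟨x, hx, fun _ _ => rfl⟩
    exact hC j _ x hyC hx hy

end Strategies

section MaxCorrect

variable {V : Type*} [Fintype V] [DecidableEq V] (E : V → V → Prop) {s : ℕ}

lemma bddAbove_card_correctSet (s : ℕ) :
    BddAbove {m : ℕ | ∃ g : V → (V → Fin s) → Fin s, IsStrategy E g ∧ m = #(correctSet g)} :=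
  ⟨Fintype.card (V → Fin s), by rintro _ ⟨g, -, rfl⟩; exact card_le_univ _⟩

variable [DecidableRel E]

lemma card_correctSet_le_maxCorrect {g : V → (V → Fin s) → Fin s} (hg : IsStrategy E g) :
    #(correctSet g) ≤ maxCorrect E s :=
  le_csSup (bddAbove_card_correctSet E s) ⟨g, hg, rfl⟩

lemma exists_card_correctSet_eq_maxCorrect (hs : 0 < s) :
    ∃ g : V → (V → Fin s) → Fin s, IsStrategy E g ∧ #(correctSet g) = maxCorrect E s := by
  have hconst : IsStrategy E fun (_ : V) (_ : V → Fin s) => (⟨0, hs⟩ : Fin s) :=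
    fun _ _ _ _ => rfl
  obtain ⟨g, hg, hcard⟩ :=
    Nat.sSup_mem (by exact ⟨_, _, hconst, rfl⟩) (bddAbove_card_correctSet E s)
  exact ⟨g, hg, hcard.symm⟩

lemma maxCorrect_pos (hs : 0 < s) : 0 < maxCorrect E s := by
  let g : V → (V → Fin s) → Fin s := fun _ _ => ⟨0, hs⟩
  have hmem : (fun _ => ⟨0, hs⟩) ∈ correctSet g := by simp [correctSet, g]
  exact (Finset.card_pos.2 ⟨_, hmem⟩).trans_le
    (card_correctSet_le_maxCorrect E (g := g) fun _ _ _ _ => rfl)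

lemma guessingNumber_eq_logb_maxCorrect (hs : 1 < s) :
    guessingNumber E s = logb s (maxCorrect E s) := by
  have hs' : (1 : ℝ) < s := by exact_mod_cast hs
  rw [guessingNumber, maxProb, logb_div (by exact_mod_cast (maxCorrect_pos E (by omega)).ne')
    (by positivity), logb_pow, logb_self_eq_one hs']
  ring

end MaxCorrect

section Uniform

variable {X : Type*} [DecidableEq X] {C : Finset X}

noncomputable def uniformDist (C : Finset X) (x : X) : ℝ :=
  if x ∈ C then (#C : ℝ)⁻¹ else 0

lemma uniformDist_nonneg (C : Finset X) (x : X) : 0 ≤ uniformDist C x := by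
  unfold uniformDist; split <;> positivity

lemma uniformDist_ne_zero_iff (hC : C.Nonempty) {x : X} : uniformDist C x ≠ 0 ↔ x ∈ C := by
  have : (#C : ℝ)⁻¹ ≠ 0 := by simpa using hC.ne_empty
  unfold uniformDist; split_ifs with hx <;> simp [hx, this]

variable [Fintype X]

lemma sum_uniformDist (hC : C.Nonempty) : ∑ x, uniformDist C x = 1 := by
  simp only [uniformDist]
  rw [Finset.sum_ite_mem, univ_inter, sum_const, nsmul_eq_mul,
    mul_inv_cancel₀ (by simpa using hC.ne_empty)]

lemma sum_negMulLog_uniformDist (hC : C.Nonempty) :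
    ∑ x, negMulLog (uniformDist C x) = log #C := by
  have hcard : (#C : ℝ) ≠ 0 := by simpa using hC.ne_empty
  simp only [uniformDist, apply_ite negMulLog, negMulLog_zero]
  rw [Finset.sum_ite_mem, univ_inter, sum_const, nsmul_eq_mul, negMulLog, log_inv]
  field_simp

end Uniform

section GraphEntropy

variable {V : Type*} [Fintype V] [DecidableEq V] {E : V → V → Prop} [DecidableRel E] {s : ℕ}

lemma infoConstraints_iff {A : Type*} [Fintype A] [DecidableEq A] (hs : 1 < s)
    {p : (V → A) → ℝ} (hp : ∀ x, 0 ≤ p x) :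
    InfoConstraints E s p ↔ IsLocallyDetermined E {x | p x ≠ 0} := by
  simp only [InfoConstraints, sub_eq_zero, hent_insert_eq_iff hs hp, IsLocallyDetermined,
    Finset.mem_filter, Finset.mem_univ, true_and, inNbr]

lemma hent_univ_le_logb_maxCorrect (hs : 1 < s) {p : (V → Fin s) → ℝ} (hp : IsProbDist p)
    (hinfo : InfoConstraints E s p) : Hent s p univ ≤ logb s (maxCorrect E s) := by
  have : Nonempty (Fin s) := ⟨⟨0, by omega⟩⟩
  obtain ⟨g, hg, hsub⟩ :=
    ((infoConstraints_iff hs hp.1).1 hinfo).exists_isStrategy_subset_correctSet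
  have hsupp : ({x | p x ≠ 0} : Finset (V → Fin s)).Nonempty :=
    nonempty_of_sum_ne_zero (by rw [sum_filter_ne_zero, hp.2]; exact one_ne_zero)
  have hlog : 0 < log s := log_pos (by exact_mod_cast hs)
  calc Hent s p univ = (∑ x, negMulLog (p x)) / log s := hent_univ s hp.1
    _ ≤ log #{x | p x ≠ 0} / log s := by
      gcongr
      exact sum_negMulLog_le_log_card_support hp.1 hp.2
    _ ≤ log (maxCorrect E s) / log s := by
      have := hsupp.card_pos
      gcongr
      exact_mod_cast (card_le_card hsub).trans (card_correctSet_le_maxCorrect E hg)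
    _ = logb s (maxCorrect E s) := rfl

lemma exists_hent_univ_eq_logb_maxCorrect (hs : 1 < s) :
    ∃ p : (V → Fin s) → ℝ, IsProbDist p ∧ InfoConstraints E s p ∧
      Hent s p univ = logb s (maxCorrect E s) := by
  obtain ⟨g, hg, hcard⟩ := exists_card_correctSet_eq_maxCorrect E (by omega : 0 < s)
  have hC : (correctSet g).Nonempty := card_pos.1 (hcard ▸ maxCorrect_pos E (by omega))
  have hsupp : ({x | uniformDist (correctSet g) x ≠ 0} : Finset (V → Fin s)) = correctSet g := by
    ext x
    simp [uniformDist_ne_zero_iff hC]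
  refine ⟨uniformDist (correctSet g), ⟨uniformDist_nonneg _, sum_uniformDist hC⟩, ?_, ?_⟩
  · rw [infoConstraints_iff hs (uniformDist_nonneg _), hsupp]
    exact hg.isLocallyDetermined_correctSet
  · rw [hent_univ s (uniformDist_nonneg _), sum_negMulLog_uniformDist hC, hcard]
    rfl

end GraphEntropy

/-- For every finite directed graph `G` and every integer `s ≥ 2`,
the entropy of `G` over an alphabet of size `s` equals the guessing number:
`E(G,s) = g(G,s)`. -/
theorem graphEntropy_eq_guessingNumber {V : Type} [Fintype V] [DecidableEq V]
    (E : V → V → Prop) [DecidableRel E] (s : ℕ) (hs : 2 ≤ s) :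
    graphEntropy E s = guessingNumber E s := by
  obtain ⟨p, hp, hinfo, hHent⟩ := exists_hent_univ_eq_logb_maxCorrect (E := E) hs
  rw [guessingNumber_eq_logb_maxCorrect E hs]
  refine IsGreatest.csSup_eq ⟨⟨p, hp, hinfo, hHent.symm⟩, ?_⟩
  rintro _ ⟨q, hq, hqinfo, rfl⟩
  exact hent_univ_le_logb_maxCorrect hs hq hqinfo
end

section
/- Let p be a probability distribution on A^V satisfying the information constraints of a finite directed graph G, and let u be the uniform probability distribution on the support of p. Then u also satisfies the information constraints of G, and H_u(V) ≥ H_p(V). -/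
open Finset

/-! Write `H(S)` for the entropy of the marginal on the coordinates in `S`. The marginal on `S` is
the image of the marginal on `insert j S` under restriction, so subadditivity of `negMulLog` on
nonnegative reals gives `H(S) ≤ H(insert j S)`, with equality exactly when each fibre of the
restriction carries at most one value of positive mass: on the support of the distribution,
`x j` is a function of the coordinates in `S`. This condition only depends on the support, which
`p` and `u` share. Finally `H(u)` is the logarithm of the size of the support, which bounds `H(p)`
by Jensen's inequality for the concave `negMulLog`. -/

open Real

section NegMulLog

variable {ι : Type*} {s : Finset ι} {t : ι → ℝ}

lemma mul_neg_log_le_negMulLog {x y : ℝ} (hx : 0 ≤ x) (hxy : x ≤ y) :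
    x * -log y ≤ negMulLog x := by
  rcases hx.eq_or_lt with rfl | hx
  · simp
  rw [negMulLog, neg_mul, mul_neg, neg_le_neg_iff]
  exact mul_le_mul_of_nonneg_left (log_le_log hx hxy) hx.le

lemma mul_neg_log_lt_negMulLog {x y : ℝ} (hx : 0 < x) (hxy : x < y) :
    x * -log y < negMulLog x := by
  rw [negMulLog, neg_mul, mul_neg, neg_lt_neg_iff]
  exact mul_lt_mul_of_pos_left (log_lt_log hx hxy) hx

lemma negMulLog_sum_eq_sum_mul_neg_log :
    negMulLog (∑ i ∈ s, t i) = ∑ i ∈ s, t i * -log (∑ k ∈ s, t k) := by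
  rw [← Finset.sum_mul, negMulLog, neg_mul, mul_neg]

lemma negMulLog_sum_le (ht : ∀ i ∈ s, 0 ≤ t i) :
    negMulLog (∑ i ∈ s, t i) ≤ ∑ i ∈ s, negMulLog (t i) := by
  rw [negMulLog_sum_eq_sum_mul_neg_log]
  exact sum_le_sum fun i hi => mul_neg_log_le_negMulLog (ht i hi) (single_le_sum ht hi)

lemma negMulLog_sum_eq_iff (ht : ∀ i ∈ s, 0 ≤ t i) :
    negMulLog (∑ i ∈ s, t i) = ∑ i ∈ s, negMulLog (t i) ↔
      ∀ a ∈ s, ∀ b ∈ s, 0 < t a → 0 < t b → a = b := by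
  constructor
  · intro heq a ha b hb hta htb
    classical
    by_contra hab
    have hlt : t a < ∑ k ∈ s, t k := by
      have := sum_le_sum_of_subset_of_nonneg (insert_subset ha (singleton_subset_iff.2 hb))
        fun i hi _ => ht i hi
      rw [sum_pair hab] at this
      linarith
    refine heq.not_lt ?_
    rw [negMulLog_sum_eq_sum_mul_neg_log]
    exact sum_lt_sum (fun i hi => mul_neg_log_le_negMulLog (ht i hi) (single_le_sum ht hi))
      ⟨a, ha, mul_neg_log_lt_negMulLog hta hlt⟩
  · intro hsub
    by_cases hpos : ∃ a ∈ s, 0 < t a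
    · obtain ⟨a, ha, hta⟩ := hpos
      have hzero : ∀ b ∈ s, b ≠ a → t b = 0 := fun b hb hba =>
        (ht b hb).eq_or_lt.elim Eq.symm fun htb => absurd (hsub b hb a ha htb hta) hba
      rw [sum_eq_single_of_mem a ha hzero,
        sum_eq_single_of_mem a ha fun b hb hba => by rw [hzero b hb hba, negMulLog_zero]]
    · push Not at hpos
      have hzero : ∀ i ∈ s, t i = 0 := fun i hi => le_antisymm (hpos i hi) (ht i hi)
      rw [sum_eq_zero hzero, negMulLog_zero,
        sum_eq_zero fun i hi => by rw [hzero i hi, negMulLog_zero]]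

end NegMulLog

section Pushforward

variable {α β γ : Type*} [Fintype α] [DecidableEq β]

noncomputable def pushforward (q : α → ℝ) (f : α → β) (b : β) : ℝ :=
  ∑ x with f x = b, q x

lemma pushforward_nonneg {q : α → ℝ} (hq : ∀ x, 0 ≤ q x) (f : α → β) (b : β) :
    0 ≤ pushforward q f b :=
  sum_nonneg fun x _ => hq x

lemma pushforward_pos_iff {q : α → ℝ} (hq : ∀ x, 0 ≤ q x) (f : α → β) (b : β) :
    0 < pushforward q f b ↔ ∃ x, 0 < q x ∧ f x = b := by
  simp [pushforward, sum_pos_iff_of_nonneg fun x _ => hq x, and_comm]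

lemma pushforward_apply_of_injective (q : α → ℝ) {f : α → β} (hf : f.Injective) (x : α) :
    pushforward q f (f x) = q x := by
  rw [pushforward, sum_filter, Fintype.sum_eq_single x fun y hy => if_neg (hf.ne hy),
    if_pos rfl]

lemma pushforward_comp [Fintype β] [DecidableEq γ] (q : α → ℝ) (f : α → β) (φ : β → γ)
    (c : γ) : pushforward q (φ ∘ f) c = ∑ b with φ b = c, pushforward q f b := by
  rw [pushforward, ← sum_fiberwise_of_maps_to (g := f) (t := {b | φ b = c}) (by simp)]
  refine sum_congr rfl fun b hb => ?_
  rw [pushforward, filter_filter]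
  congr 1 with x
  simp only [mem_filter, mem_univ, true_and, Function.comp_apply] at hb ⊢
  exact ⟨And.right, fun hx => ⟨hx ▸ hb, hx⟩⟩

lemma sum_negMulLog_pushforward_comp_eq_iff [Fintype β] [Fintype γ] [DecidableEq γ]
    {q : α → ℝ} (hq : ∀ x, 0 ≤ q x) (f : α → β) (φ : β → γ) :
    ∑ c, negMulLog (pushforward q (φ ∘ f) c) = ∑ b, negMulLog (pushforward q f b) ↔
      ∀ x x', 0 < q x → 0 < q x' → φ (f x) = φ (f x') → f x = f x' := by
  have hle : ∀ c ∈ (univ : Finset γ), negMulLog (pushforward q (φ ∘ f) c) ≤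
      ∑ b with φ b = c, negMulLog (pushforward q f b) := fun c _ => by
    rw [pushforward_comp]
    exact negMulLog_sum_le fun b _ => pushforward_nonneg hq f b
  rw [← sum_fiberwise (g := φ), sum_eq_sum_iff_of_le hle]
  simp only [pushforward_comp, negMulLog_sum_eq_iff fun b _ => pushforward_nonneg hq f b,
    mem_filter, mem_univ, true_and, forall_const, pushforward_pos_iff hq]
  constructor
  · intro h x x' hx hx' hφ
    exact h _ _ rfl _ hφ.symm ⟨x, hx, rfl⟩ ⟨x', hx', rfl⟩
  · rintro h c b rfl b' hb' ⟨x, hx, rfl⟩ ⟨x', hx', rfl⟩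
    exact h x x' hx hx' hb'.symm

end Pushforward

section Marginal

variable {V A : Type*} [Fintype V] [DecidableEq V] [Fintype A] [DecidableEq A]

lemma marginalPMF_eq_pushforward (q : (V → A) → ℝ) (S : Finset V) :
    marginalPMF q S = pushforward q S.restrict := by
  funext y
  rw [marginalPMF, pushforward, sum_filter]
  exact sum_congr rfl fun x _ => if_congr funext_iff.symm rfl rfl

lemma Hent_eq_sum_pushforward (s : ℕ) (q : (V → A) → ℝ) (S : Finset V) :
    Hent s q S = (∑ y, negMulLog (pushforward q S.restrict y)) / log s := by
  rw [Hent, marginalPMF_eq_pushforward]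

lemma Hent_univ (s : ℕ) (q : (V → A) → ℝ) :
    Hent s q univ = (∑ x, negMulLog (q x)) / log s := by
  rw [Hent_eq_sum_pushforward]
  congr 1
  have hbij : (univ.restrict : (V → A) → (↥(univ : Finset V) → A)).Bijective :=
    ((Equiv.subtypeUnivEquiv mem_univ).arrowCongr (Equiv.refl A)).symm.bijective
  exact (Fintype.sum_bijective _ hbij _ _ fun x =>
    congrArg negMulLog (pushforward_apply_of_injective q hbij.injective x).symm).symm

lemma Hent_insert_eq_iff {s : ℕ} {q : (V → A) → ℝ} (hs : log s ≠ 0) (hq : ∀ x, 0 ≤ q x)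
    (S : Finset V) (j : V) :
    Hent s q (insert j S) = Hent s q S ↔
      ∀ x x', 0 < q x → 0 < q x' → (∀ i ∈ S, x i = x' i) → x j = x' j := by
  rw [Hent_eq_sum_pushforward, Hent_eq_sum_pushforward, div_left_inj' hs, eq_comm,
    ← restrict₂_comp_restrict (subset_insert j S), sum_negMulLog_pushforward_comp_eq_iff hq]
  simp +contextual [funext_iff]

end Marginal

section Uniform

variable {α : Type*} [Fintype α]

lemma negMulLog_inv (x : ℝ) : negMulLog x⁻¹ = x⁻¹ * log x := by
  rw [negMulLog, log_inv]; ring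

lemma sum_negMulLog_uniform (P : α → Prop) [DecidablePred P] :
    ∑ x, negMulLog (if P x then (#{x | P x} : ℝ)⁻¹ else 0) = log #{x | P x} := by
  simp only [apply_ite negMulLog, negMulLog_zero, ← sum_filter, sum_const, nsmul_eq_mul,
    negMulLog_inv, ← mul_assoc]
  rcases eq_or_ne (#{x | P x} : ℝ) 0 with h | h
  · simp [h]
  · rw [mul_inv_cancel₀ h, one_mul]

lemma nonempty_support_of_sum_eq_one {q : α → ℝ} (hq1 : ∑ x, q x = 1) :
    ({x | 0 < q x} : Finset α).Nonempty := by
  obtain ⟨x, -, hx⟩ := exists_lt_of_sum_lt (s := univ) (f := fun _ => (0 : ℝ)) (g := q)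
    (by simp [hq1])
  exact ⟨x, mem_filter.2 ⟨mem_univ x, hx⟩⟩

lemma sum_negMulLog_le_log_card_support_s4 {q : α → ℝ} (hq0 : ∀ x, 0 ≤ q x)
    (hq1 : ∑ x, q x = 1) : ∑ x, negMulLog (q x) ≤ log #{x | 0 < q x} := by
  set T : Finset α := {x | 0 < q x}
  have hqT : ∑ x ∈ T, q x = 1 := by
    rw [sum_filter_of_ne fun x _ hx => (hq0 x).lt_of_ne' hx, hq1]
  have hnegT : ∑ x ∈ T, negMulLog (q x) = ∑ x, negMulLog (q x) :=
    sum_filter_of_ne fun x _ hx => (hq0 x).lt_of_ne' fun h => hx (by rw [h, negMulLog_zero])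
  have hT : (0 : ℝ) < #T := by
    exact_mod_cast (nonempty_support_of_sum_eq_one hq1).card_pos
  have hw : ∑ _x ∈ T, (#T : ℝ)⁻¹ = 1 := by
    rw [sum_const, nsmul_eq_mul, mul_inv_cancel₀ hT.ne']
  have hjensen := concaveOn_negMulLog.le_map_sum (fun _ _ => (inv_pos.2 hT).le) hw
    fun x _ => Set.mem_Ici.2 (hq0 x)
  simp only [smul_eq_mul, ← mul_sum, hqT, mul_one, hnegT, negMulLog_inv] at hjensen
  exact le_of_mul_le_mul_left hjensen (inv_pos.2 hT)

end Uniform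

/-- If `p` satisfies the information constraints of `G` and `u` is the
uniform distribution on the support of `p`, then `u` also satisfies the information
constraints of `G` and `H_u(V) ≥ H_p(V)`. -/
theorem uniform_on_support_satisfies_constraints {V : Type} [Fintype V] [DecidableEq V]
    (E : V → V → Prop) [DecidableRel E] (s : ℕ) (hs : 2 ≤ s)
    (p : (V → Fin s) → ℝ) (hp : IsProbDist p) (hpc : InfoConstraints E s p)
    (u : (V → Fin s) → ℝ)
    (hu : u = fun x => if 0 < p x
      then ((Finset.univ.filter (fun y : V → Fin s => 0 < p y)).card : ℝ)⁻¹ else 0) :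
    InfoConstraints E s u ∧ Hent s p Finset.univ ≤ Hent s u Finset.univ := by
  obtain ⟨hp0, hp1⟩ := hp
  have hcard : (0 : ℝ) < #{y | 0 < p y} := by
    exact_mod_cast (nonempty_support_of_sum_eq_one hp1).card_pos
  have hu0 : ∀ x, 0 ≤ u x := fun x => by
    simp only [hu]; split_ifs <;> positivity
  have hsupp : ∀ x, 0 < u x ↔ 0 < p x := fun x => by
    simp only [hu]; split_ifs with h <;> simp [h, hcard]
  have hlog : 0 < log s := log_pos (by exact_mod_cast hs)
  refine ⟨fun j => ?_, ?_⟩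
  · rw [sub_eq_zero, Hent_insert_eq_iff hlog.ne' hu0]
    simp only [hsupp]
    exact (Hent_insert_eq_iff hlog.ne' hp0 _ j).1 (sub_eq_zero.1 (hpc j))
  · rw [Hent_univ, Hent_univ, hu, sum_negMulLog_uniform]
    exact div_le_div_of_nonneg_right (sum_negMulLog_le_log_card_support_s4 hp0 hp1) hlog.le
end

section
/- For every finite directed graph G = (V,E), the S-entropy of G is bounded above by |V| minus the acyclic independence number of G: E_S(G) ≤ |V| − α_acyc(G). -/
open Finset

/-!
Take an acyclic set `S` of maximal size `α_acyc(G)`. Peeling off its vertices in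
reverse topological order, each removed vertex has all its in-neighbours among the remaining
ones, so the information constraint together with submodularity shows that `f` does not
decrease. Hence `f(V) ≤ f(V \ S)`, and subadditivity with `f({j}) ≤ 1` bounds the latter by
`|V| - α_acyc(G)`.
-/

section Acyclic

variable {V : Type*} {E : V → V → Prop}

lemma AcyclicOn.mono {S T : Finset V} (hS : AcyclicOn E S) (hTS : T ⊆ S) : AcyclicOn E T :=
  fun v hv hcyc => hS v (hTS hv) <|
    Relation.TransGen.mono (fun _ _ ⟨ha, hb, hab⟩ => ⟨hTS ha, hTS hb, hab⟩) v v hcyc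

lemma AcyclicOn.exists_sink {S : Finset V} (hS : AcyclicOn E S) (hne : S.Nonempty) :
    ∃ v ∈ S, ∀ u ∈ S, ¬ E v u := by
  let reachedFrom : S → S → Prop := fun a b =>
    Relation.TransGen (fun a b => a ∈ S ∧ b ∈ S ∧ E a b) b a
  have : IsTrans S reachedFrom := ⟨fun _ _ _ hab hbc => hbc.trans hab⟩
  have : Std.Irrefl reachedFrom := ⟨fun a => hS a a.2⟩
  obtain ⟨⟨v, hv⟩, -, hmin⟩ :=
    (Finite.wellFounded_of_trans_of_irrefl reachedFrom).has_min Set.univ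
      ⟨⟨_, hne.choose_spec⟩, trivial⟩
  exact ⟨v, hv, fun u hu hvu => hmin ⟨u, hu⟩ trivial (.single ⟨hv, hu, hvu⟩)⟩

end Acyclic

section SEntLike

lemma SEntLike.le_card {U : Type*} [DecidableEq U] {f : Finset U → ℝ} (hf : SEntLike f)
    (hnorm : ∀ j, f {j} ≤ 1) (X : Finset U) : f X ≤ #X := by
  induction X using Finset.induction with
  | empty => simp [hf.1]
  | insert a X ha ih =>
    have hsub := hf.2.2 {a} X
    rw [singleton_inter_of_notMem ha, ← insert_eq, hf.1] at hsub
    rw [card_insert_of_notMem ha, Nat.cast_succ]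
    linarith [hnorm a]

variable {V : Type*} [Fintype V] [DecidableEq V] {E : V → V → Prop} [DecidableRel E]
  {f : Finset V → ℝ}

lemma SEntLike.insert_le_of_inNbr_subset (hf : SEntLike f) (hc : FConstraints E f) {v : V}
    {X : Finset V} (hN : inNbr E v ⊆ X) : f (insert v X) ≤ f X := by
  by_cases hvX : v ∈ X
  · rw [insert_eq_of_mem hvX]
  have hsub := hf.2.2 X (insert v (inNbr E v))
  rw [inter_insert_of_notMem hvX, inter_eq_right.mpr hN, union_insert,
    union_eq_left.mpr hN, hc v] at hsub
  linarith

lemma SEntLike.union_le_of_acyclicOn (hf : SEntLike f) (hc : FConstraints E f)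
    {X S : Finset V} (hS : AcyclicOn E S) (hN : ∀ v ∈ S, inNbr E v ⊆ X ∪ S) :
    f (X ∪ S) ≤ f X := by
  induction S using Finset.strongInduction with
  | H S ih =>
    obtain rfl | hne := S.eq_empty_or_nonempty
    · rw [union_empty]
    obtain ⟨v, hvS, hsink⟩ := hS.exists_sink hne
    have hnotin : ∀ u ∈ S, v ∉ inNbr E u := fun u hu h => hsink u hu (by simpa [inNbr] using h)
    have hN' : ∀ u ∈ S, inNbr E u ⊆ X ∪ S.erase v := fun u hu w hw => by
      have := hN u hu hw
      simp only [mem_union, mem_erase] at this ⊢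
      exact this.imp_right fun h => ⟨fun hwv => hnotin u hu (hwv ▸ hw), h⟩
    calc f (X ∪ S) = f (insert v (X ∪ S.erase v)) := by
          rw [← union_insert, insert_erase hvS]
      _ ≤ f (X ∪ S.erase v) := hf.insert_le_of_inNbr_subset hc (hN' v hvS)
      _ ≤ f X := ih _ (erase_ssubset hvS) (hS.mono (erase_subset v S))
          fun u hu => hN' u (mem_of_mem_erase hu)

end SEntLike

lemma exists_acyclicOn_card_eq_acycIndepNum {V : Type*} [Fintype V] (E : V → V → Prop) :
    ∃ S : Finset V, AcyclicOn E S ∧ #S = acycIndepNum E := by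
  obtain ⟨S, hS, hcard⟩ : acycIndepNum E ∈ {k | ∃ S : Finset V, AcyclicOn E S ∧ k = #S} :=
    Nat.sSup_mem ⟨0, ∅, fun _ hv => absurd hv (notMem_empty _), rfl⟩
      ⟨Fintype.card V, fun _ ⟨S, _, hk⟩ => hk ▸ S.card_le_univ⟩
  exact ⟨S, hS, hcard.symm⟩

lemma SEntLike.apply_univ_le_card_sub {V : Type*} [Fintype V] [DecidableEq V]
    {E : V → V → Prop} [DecidableRel E] {f : Finset V → ℝ} (hf : SEntLike f)
    (hnorm : ∀ j, f {j} ≤ 1) (hc : FConstraints E f) {S : Finset V} (hS : AcyclicOn E S) :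
    f univ ≤ Fintype.card V - #S :=
  calc f univ = f ((univ \ S) ∪ S) := by rw [sdiff_union_of_subset (subset_univ S)]
    _ ≤ f (univ \ S) := hf.union_le_of_acyclicOn hc hS fun _ _ => by
        rw [sdiff_union_of_subset (subset_univ S)]; exact subset_univ _
    _ ≤ #(univ \ S) := hf.le_card hnorm _
    _ = Fintype.card V - #S := by
        rw [card_univ_sdiff, Nat.cast_sub (card_le_univ S)]

/-- The S-entropy of `G` is at most `|V|` minus the acyclic independence
number of `G`. -/
theorem SEnt_le_card_sub_acycIndepNum {V : Type} [Fintype V] [DecidableEq V]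
    (E : V → V → Prop) [DecidableRel E] :
    SEnt E ≤ (Fintype.card V : ℝ) - (acycIndepNum E : ℝ) := by
  obtain ⟨S, hS, hcard⟩ := exists_acyclicOn_card_eq_acycIndepNum E
  have hzero : SEntLike (fun _ : Finset V => (0 : ℝ)) :=
    ⟨rfl, fun _ _ _ => le_rfl, fun _ _ => by norm_num⟩
  refine csSup_le ⟨0, fun _ => 0, hzero, fun _ => zero_le_one, fun _ => rfl, rfl⟩ ?_
  rintro _ ⟨f, hf, hnorm, hc, rfl⟩
  rw [← hcard]
  exact hf.apply_univ_le_card_sub hnorm hc hS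
end

section
/- Every normalized S-entropy-like function f on subsets of {1,...,5} that satisfies the information constraints of the bidirected pentagon C5 has f({1,2,3,4,5}) ≤ 5/2; that is, E_S(C5) ≤ 5/2. -/
open Finset

/-
Call a vertex set `S` closed if every vertex outside `S` has all its in-neighbours in `S`;
the information constraints and submodularity give `f S = f V` for such `S`.
In `C5` with vertices `0, …, 4`, the constraints at `1` and `0` and submodularity give
`f {0,2} + f {1,4} = f {0,1,2} + f {0,1,4} ≥ f {0,1} + f {0,1,2,4}`, and both `{0,1,2,4}` and
`{0,1,3}` are closed. Hence `∑ f {j} ≥ f {0,2} + f {1,4} + f {3} ≥ f V + f {0,1} + f {3} ≥ 2 f V`.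
-/

section EntropyLike

variable {U : Type*} [DecidableEq U] {f : Finset U → ℝ}

theorem SEntLike.apply_union_le (hf : SEntLike f) (X Y : Finset U) :
    f (X ∪ Y) ≤ f X + f Y := by
  obtain ⟨h_empty, h_mono, h_sub⟩ := hf
  have := h_mono ∅ (X ∩ Y) (empty_subset _)
  linarith [h_sub X Y]

end EntropyLike

section Constraints

variable {V : Type*} [Fintype V] [DecidableEq V] {E : V → V → Prop} [DecidableRel E]
  {f : Finset V → ℝ}

theorem FConstraints.apply_insert_of_inNbr_subset (hf : SEntLike f) (hc : FConstraints E f)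
    {j : V} {S : Finset V} (hS : inNbr E j ⊆ S) : f (insert j S) = f S := by
  by_cases hj : j ∈ S
  · rw [insert_eq_of_mem hj]
  obtain ⟨-, h_mono, h_sub⟩ := hf
  have h := h_sub S (insert j (inNbr E j))
  rw [inter_comm, insert_inter_of_notMem hj, inter_eq_left.mpr hS, union_insert,
    union_eq_left.mpr hS, hc j] at h
  exact le_antisymm (by linarith) (h_mono _ _ (subset_insert j S))

theorem SEnt_le_of_forall_le {c : ℝ} (hc₀ : 0 ≤ c)
    (h : ∀ f : Finset V → ℝ, SEntLike f → (∀ j : V, f {j} ≤ 1) → FConstraints E f →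
      f univ ≤ c) :
    SEnt E ≤ c :=
  Real.sSup_le (fun _ ⟨f, hf, hn, hc, hx⟩ => hx ▸ h f hf hn hc) hc₀

end Constraints

theorem inNbr_E5 (j : Fin 5) : inNbr E5 j = {j - 1, j + 1} := by
  revert j; decide

theorem pentagon_two_mul_apply_univ_le (f : Finset (Fin 5) → ℝ) (hf : SEntLike f)
    (hc : FConstraints E5 f) : 2 * f univ ≤ ∑ j, f {j} := by
  have closure (j : Fin 5) {S T : Finset (Fin 5)} (hS : {j - 1, j + 1} ⊆ S)
      (hT : insert j S = T) : f T = f S :=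
    hT ▸ hc.apply_insert_of_inNbr_subset hf (inNbr_E5 j ▸ hS)
  have h02 : f {0, 1, 2} = f {0, 2} := closure 1 (by decide) (by decide)
  have h14 : f {0, 1, 4} = f {1, 4} := closure 0 (by decide) (by decide)
  have h0124 : f univ = f {0, 1, 2, 4} := closure 3 (by decide) (by decide)
  have h013 : f univ = f {0, 1, 3} :=
    (closure 4 (S := {0, 1, 2, 3}) (by decide) (by decide)).trans
      (closure 2 (by decide) (by decide))
  have h_sub : f {0, 1} + f {0, 1, 2, 4} ≤ f {0, 1, 2} + f {0, 1, 4} := by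
    simpa only [show ({0, 1, 2} ∩ {0, 1, 4} : Finset (Fin 5)) = {0, 1} by decide,
      show ({0, 1, 2} ∪ {0, 1, 4} : Finset (Fin 5)) = {0, 1, 2, 4} by decide]
      using hf.2.2 {0, 1, 2} {0, 1, 4}
  have h_add {X Y Z : Finset (Fin 5)} (h : X ∪ Y = Z) : f Z ≤ f X + f Y :=
    h ▸ hf.apply_union_le X Y
  have h0_2 : f {0, 2} ≤ f {0} + f {2} := h_add (by decide)
  have h1_4 : f {1, 4} ≤ f {1} + f {4} := h_add (by decide)
  have h01_3 : f {0, 1, 3} ≤ f {0, 1} + f {3} := h_add (by decide)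
  rw [Fin.sum_univ_five]
  linarith

/-- Every normalized S-entropy-like function on subsets of the vertices
of the bidirected pentagon `C5` that satisfies the information constraints of `C5` has
`f(V) ≤ 5/2`; that is, `E_S(C5) ≤ 5/2`. -/
theorem pentagon_SEnt_le_five_halves :
    (∀ f : Finset (Fin 5) → ℝ, SEntLike f → (∀ j : Fin 5, f {j} ≤ 1) →
      FConstraints E5 f → f Finset.univ ≤ 5 / 2)
    ∧ SEnt E5 ≤ 5 / 2 := by
  have bound (f : Finset (Fin 5) → ℝ) (hf : SEntLike f) (hn : ∀ j : Fin 5, f {j} ≤ 1)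
      (hc : FConstraints E5 f) : f univ ≤ 5 / 2 := by
    have := pentagon_two_mul_apply_univ_le f hf hc
    rw [Fin.sum_univ_five] at this
    linarith [hn 0, hn 1, hn 2, hn 3, hn 4]
  exact ⟨bound, SEnt_le_of_forall_le (by norm_num) bound⟩
end
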